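/- One has the ideal equality (v1·I_{W1}) ∩ (h1^{m11} h2^{m21}·(h1,v2)^{(m12−m11)_+}) = v1 h1^{m11} h2^{m21}·(h1,v2)^{(m12−m11)_+}, where for a polynomial f and an ideal I, f·I denotes the ideal of all multiples of elements of I by f. -/

import Mathlib

/-!
The hypotheses make `v1, h1, h2, v2` a system of coordinates, so a `k`-algebra automorphism
followed by `finSuccEquiv` identifies the ring with `S[v1]`, where `S` is the polynomial ring in
`h1, h2, v2`. The ideal `J = h1^{m11} h2^{m21} (h1, v2)^{m12 - m11}` is extended from `S`, so `v1`
is a nonzerodivisor modulo `J` and `(v1) ∩ J = v1 J`. Since `J ⊆ I_{W1}`, this gives both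
inclusions.
-/

open MvPolynomial

/-- The kernels of the iterates `f ^ n` stabilise; an element of `ker f` is `f^[n] y` with
`y ∈ ker (f ^ (n + 1)) = ker (f ^ n)`. -/
theorem RingHom.injective_of_surjective_of_isNoetherianRing {R : Type*} [CommRing R]
    [IsNoetherianRing R] {f : R →+* R} (hf : Function.Surjective f) :
    Function.Injective f := by
  have hmono : Monotone fun n => RingHom.ker (f ^ n) := by
    intro m n hmn x hx
    rw [RingHom.mem_ker, RingHom.coe_pow] at hx ⊢
    rw [← Nat.sub_add_cancel hmn, Function.iterate_add_apply, hx, iterate_map_zero]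
  obtain ⟨n, hn⟩ := monotone_stabilizes_iff_noetherian.mpr
    (inferInstance : IsNoetherian R R) ⟨_, hmono⟩
  refine (injective_iff_map_eq_zero f).mpr fun x hx => ?_
  obtain ⟨y, rfl⟩ := hf.iterate n x
  have hy : y ∈ RingHom.ker (f ^ (n + 1)) := by
    rwa [RingHom.mem_ker, RingHom.coe_pow, Function.iterate_succ_apply']
  have hstable : RingHom.ker (f ^ n) = RingHom.ker (f ^ (n + 1)) := hn (n + 1) n.le_succ
  rwa [← hstable, RingHom.mem_ker, RingHom.coe_pow] at hy

theorem MvPolynomial.aeval_surjective_of_X_mem_span {σ τ R : Type*} [CommSemiring R]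
    {p : σ → MvPolynomial τ R} (h : ∀ j, X j ∈ Submodule.span R (Set.range p)) :
    Function.Surjective (aeval (R := R) p) := by
  rw [← AlgHom.range_eq_top, eq_top_iff, ← adjoin_range_X, Algebra.adjoin_le_iff]
  rintro _ ⟨j, rfl⟩
  refine (Submodule.span_le (p := Subalgebra.toSubmodule (aeval p).range)).mpr ?_ (h j)
  rintro _ ⟨i, rfl⟩
  exact ⟨X i, aeval_X p i⟩

theorem MvPolynomial.aeval_bijective_of_X_mem_span {σ R : Type*} [Finite σ] [CommRing R]
    [IsNoetherianRing R] {p : σ → MvPolynomial σ R}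
    (h : ∀ j, X j ∈ Submodule.span R (Set.range p)) :
    Function.Bijective (aeval (R := R) p) :=
  have hs := aeval_surjective_of_X_mem_span h
  ⟨RingHom.injective_of_surjective_of_isNoetherianRing (f := (aeval p).toRingHom) hs, hs⟩

theorem Submodule.span_pair_eq_of_linearIndependent {K V : Type*} [Field K] [AddCommGroup V]
    [Module K V] {a b c d : V} (hc : c ∈ span K {a, b}) (hd : d ∈ span K {a, b})
    (hcd : LinearIndependent K ![c, d]) : span K {c, d} = span K {a, b} := by
  have := FiniteDimensional.span_of_finite K (Set.toFinite {a, b})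
  refine eq_of_le_of_finrank_le
    (span_le.mpr (Set.insert_subset hc (Set.singleton_subset_iff.mpr hd))) ?_
  have hab := finrank_range_le_card (R := K) ![a, b]
  have hcd := finrank_span_eq_card hcd
  rw [Matrix.range_cons_cons_empty] at hab hcd
  simp only [Fintype.card_fin] at hab hcd
  exact hab.trans hcd.ge

theorem Polynomial.mem_map_C_of_X_mul_mem {R : Type*} [CommRing R] {I : Ideal R}
    {f : Polynomial R} (h : Polynomial.X * f ∈ I.map Polynomial.C) :
    f ∈ I.map Polynomial.C := by
  rw [Ideal.mem_map_C_iff] at h ⊢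
  intro n
  simpa [Polynomial.coeff_X_mul] using h (n + 1)

theorem Ideal.span_singleton_inf_eq_mul {R : Type*} [CommRing R] {v : R} {I : Ideal R}
    (hv : ∀ g, v * g ∈ I → g ∈ I) : Ideal.span {v} ⊓ I = Ideal.span {v} * I := by
  refine le_antisymm ?_ Ideal.mul_le_inf
  rintro f ⟨hfv, hfI⟩
  obtain ⟨g, rfl⟩ := Ideal.mem_span_singleton'.mp hfv
  rw [mul_comm g v] at hfI ⊢
  exact Ideal.mul_mem_mul (Ideal.mem_span_singleton_self v) (hv g hfI)

theorem Ideal.span_singleton_pow_mul_le_pow {R : Type*} [CommRing R] {P : Ideal R} {a : R}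
    (ha : a ∈ P) (m : ℕ) (b : R) : Ideal.span {a ^ m * b} ≤ P ^ m :=
  (Ideal.span_singleton_le_iff_mem _).mpr (Ideal.mul_mem_right _ _ (Ideal.pow_mem_pow ha m))

theorem span_mul_pow_le_inf {R : Type*} [CommRing R] (h1 h2 v1 v2 : R) (m11 m12 m21 : ℕ) :
    Ideal.span {h1 ^ m11 * h2 ^ m21} * Ideal.span {h1, v2} ^ (m12 - m11) ≤
      Ideal.span {h1, v1} ^ (m11 - 1) ⊓ Ideal.span {h1, v2} ^ m12 ⊓
        Ideal.span {h2, v1} ^ (m21 - 1) := by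
  have hh1 (x : R) : h1 ∈ Ideal.span {h1, x} := Ideal.subset_span (Set.mem_insert _ _)
  refine le_inf (le_inf ?_ ?_) ?_
  · exact Ideal.mul_le_left.trans <| (Ideal.span_singleton_pow_mul_le_pow (hh1 v1) _ _).trans
      (Ideal.pow_le_pow_right (Nat.sub_le m11 1))
  · calc _ ≤ Ideal.span {h1, v2} ^ m11 * Ideal.span {h1, v2} ^ (m12 - m11) :=
          Ideal.mul_mono_left (Ideal.span_singleton_pow_mul_le_pow (hh1 v2) _ _)
      _ ≤ Ideal.span {h1, v2} ^ m12 := by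
          rw [← pow_add]
          exact Ideal.pow_le_pow_right (by omega)
  · rw [mul_comm (h1 ^ m11)]
    exact Ideal.mul_le_left.trans <|
      (Ideal.span_singleton_pow_mul_le_pow (Ideal.subset_span (Set.mem_insert _ _)) _ _).trans
        (Ideal.pow_le_pow_right (Nat.sub_le m21 1))

theorem X_mem_span_of_linearIndependent_pairs {k : Type*} [Field k]
    {h1 h2 v1 v2 : MvPolynomial (Fin 4) k}
    (hh1 : h1 ∈ Submodule.span k ({X 0, X 1} : Set (MvPolynomial (Fin 4) k)))
    (hh2 : h2 ∈ Submodule.span k ({X 0, X 1} : Set (MvPolynomial (Fin 4) k)))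
    (hhind : LinearIndependent k ![h1, h2])
    (hv1 : v1 ∈ Submodule.span k ({X 2, X 3} : Set (MvPolynomial (Fin 4) k)))
    (hv2 : v2 ∈ Submodule.span k ({X 2, X 3} : Set (MvPolynomial (Fin 4) k)))
    (hvind : LinearIndependent k ![v1, v2]) (j : Fin 4) :
    X j ∈ Submodule.span k (Set.range ![v1, h1, h2, v2]) := by
  have hsub : Submodule.span k {h1, h2} ⊔ Submodule.span k {v1, v2} ≤
      Submodule.span k (Set.range ![v1, h1, h2, v2]) := by
    rw [← Submodule.span_union]
    refine Submodule.span_mono ?_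
    simp [Matrix.range_cons, Set.subset_def]
  refine hsub ?_
  rw [Submodule.span_pair_eq_of_linearIndependent hh1 hh2 hhind,
    Submodule.span_pair_eq_of_linearIndependent hv1 hv2 hvind]
  fin_cases j
  · exact Submodule.mem_sup_left (Submodule.subset_span (by simp))
  · exact Submodule.mem_sup_left (Submodule.subset_span (by simp))
  · exact Submodule.mem_sup_right (Submodule.subset_span (by simp))
  · exact Submodule.mem_sup_right (Submodule.subset_span (by simp))

section Coordinates

variable {R : Type*} [CommRing R] [IsNoetherianRing R] {h1 h2 v1 v2 : MvPolynomial (Fin 4) R}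

theorem exists_algEquiv_polynomial_of_X_mem_span
    (hspan : ∀ j, X j ∈ Submodule.span R (Set.range ![v1, h1, h2, v2])) :
    ∃ e : MvPolynomial (Fin 4) R ≃ₐ[R] Polynomial (MvPolynomial (Fin 3) R),
      e v1 = Polynomial.X ∧ e h1 = Polynomial.C (X 0) ∧ e h2 = Polynomial.C (X 1) ∧
        e v2 = Polynomial.C (X 2) := by
  let φ := AlgEquiv.ofBijective _ (aeval_bijective_of_X_mem_span hspan)
  have hφ (i : Fin 4) : φ.symm (![v1, h1, h2, v2] i) = X i :=
    φ.symm_apply_eq.mpr (aeval_X _ i).symm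
  refine ⟨φ.symm.trans (finSuccEquiv R 3), ?_, ?_, ?_, ?_⟩
  · exact (congrArg (finSuccEquiv R 3) (hφ 0)).trans finSuccEquiv_X_zero
  · exact (congrArg (finSuccEquiv R 3) (hφ 1)).trans (finSuccEquiv_X_succ (j := 0))
  · exact (congrArg (finSuccEquiv R 3) (hφ 2)).trans (finSuccEquiv_X_succ (j := 1))
  · exact (congrArg (finSuccEquiv R 3) (hφ 3)).trans (finSuccEquiv_X_succ (j := 2))

theorem mem_of_mul_mem_span_mul_span_pow
    (hspan : ∀ j, X j ∈ Submodule.span R (Set.range ![v1, h1, h2, v2])) (a b n : ℕ)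
    {g : MvPolynomial (Fin 4) R}
    (hg : v1 * g ∈ Ideal.span {h1 ^ a * h2 ^ b} * Ideal.span {h1, v2} ^ n) :
    g ∈ Ideal.span {h1 ^ a * h2 ^ b} * Ideal.span {h1, v2} ^ n := by
  obtain ⟨e, ev1, eh1, eh2, ev2⟩ := exists_algEquiv_polynomial_of_X_mem_span hspan
  have hmap : (Ideal.span {h1 ^ a * h2 ^ b} * Ideal.span {h1, v2} ^ n).map e.toRingEquiv =
      (Ideal.span {(X 0 ^ a * X 1 ^ b : MvPolynomial (Fin 3) R)} *
        Ideal.span {X 0, X 2} ^ n).map Polynomial.C := by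
    simp [Ideal.map_mul, Ideal.map_pow, Ideal.map_span, Set.image_pair, eh1, eh2, ev2]
  rw [← Ideal.apply_mem_of_equiv_iff (f := e.toRingEquiv), hmap] at hg ⊢
  rw [map_mul] at hg
  exact Polynomial.mem_map_C_of_X_mul_mem (by simpa [ev1] using hg)

end Coordinates

theorem fat_three_points_intersection_general
    {k : Type*} [Field k]
    (h1 h2 v1 v2 : MvPolynomial (Fin 4) k)
    (hh1 : h1 ∈ Submodule.span k ({X 0, X 1} : Set (MvPolynomial (Fin 4) k)))
    (hh2 : h2 ∈ Submodule.span k ({X 0, X 1} : Set (MvPolynomial (Fin 4) k)))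
    (hhind : LinearIndependent k ![h1, h2])
    (hv1 : v1 ∈ Submodule.span k ({X 2, X 3} : Set (MvPolynomial (Fin 4) k)))
    (hv2 : v2 ∈ Submodule.span k ({X 2, X 3} : Set (MvPolynomial (Fin 4) k)))
    (hvind : LinearIndependent k ![v1, v2])
    (m11 m12 m21 : ℕ)
    (IW1 : Ideal (MvPolynomial (Fin 4) k))
    (hIW1 : IW1 = Ideal.span {h1, v1} ^ (m11 - 1) ⊓ Ideal.span {h1, v2} ^ m12 ⊓
        Ideal.span {h2, v1} ^ (m21 - 1)) :
    (Ideal.span {v1} * IW1) ⊓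
        (Ideal.span {h1 ^ m11 * h2 ^ m21} * Ideal.span {h1, v2} ^ (m12 - m11)) =
      Ideal.span {v1 * h1 ^ m11 * h2 ^ m21} * Ideal.span {h1, v2} ^ (m12 - m11) := by
  subst hIW1
  set J := Ideal.span {h1 ^ m11 * h2 ^ m21} * Ideal.span {h1, v2} ^ (m12 - m11) with hJ
  have hregular (g : MvPolynomial (Fin 4) k) : v1 * g ∈ J → g ∈ J :=
    mem_of_mul_mem_span_mul_span_pow
      (X_mem_span_of_linearIndependent_pairs hh1 hh2 hhind hv1 hv2 hvind) m11 m21 (m12 - m11)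
  have hproduct : Ideal.span {v1 * h1 ^ m11 * h2 ^ m21} * Ideal.span {h1, v2} ^ (m12 - m11) =
      Ideal.span {v1} * J := by
    rw [hJ, ← mul_assoc, Ideal.span_singleton_mul_span_singleton, mul_assoc]
  rw [hproduct]
  refine le_antisymm ?_ (le_inf (Ideal.mul_mono_right ?_) Ideal.mul_le_right)
  · rw [← Ideal.span_singleton_inf_eq_mul hregular]
    exact inf_le_inf_right _ Ideal.mul_le_left
  · exact span_mul_pow_le_inf h1 h2 v1 v2 m11 m12 m21

/-- Proposition 2.9: the intersection
`(v1·I_{W1}) ∩ (h1^{m11} h2^{m21}·(h1,v2)^{(m12-m11)_+}) = v1 h1^{m11} h2^{m21}·(h1,v2)^{(m12-m11)_+}`. -/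
theorem fat_three_points_intersection
    {k : Type*} [Field k]
    (h1 h2 v1 v2 : MvPolynomial (Fin 4) k)
    (hh1 : h1 ∈ Submodule.span k ({X 0, X 1} : Set (MvPolynomial (Fin 4) k)))
    (hh2 : h2 ∈ Submodule.span k ({X 0, X 1} : Set (MvPolynomial (Fin 4) k)))
    (hhind : LinearIndependent k ![h1, h2])
    (hv1 : v1 ∈ Submodule.span k ({X 2, X 3} : Set (MvPolynomial (Fin 4) k)))
    (hv2 : v2 ∈ Submodule.span k ({X 2, X 3} : Set (MvPolynomial (Fin 4) k)))
    (hvind : LinearIndependent k ![v1, v2])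
    (m11 m12 m21 : ℕ) (hm : m21 ≤ m12)
    (IW IW1 : Ideal (MvPolynomial (Fin 4) k))
    (hIW : IW = Ideal.span {h1, v1} ^ m11 ⊓ Ideal.span {h1, v2} ^ m12 ⊓
        Ideal.span {h2, v1} ^ m21)
    (hIW1 : IW1 = Ideal.span {h1, v1} ^ (m11 - 1) ⊓ Ideal.span {h1, v2} ^ m12 ⊓
        Ideal.span {h2, v1} ^ (m21 - 1)) :
    (Ideal.span {v1} * IW1) ⊓
        (Ideal.span {h1 ^ m11 * h2 ^ m21} * Ideal.span {h1, v2} ^ (m12 - m11)) =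
      Ideal.span {v1 * h1 ^ m11 * h2 ^ m21} * Ideal.span {h1, v2} ^ (m12 - m11) :=
  fat_three_points_intersection_general h1 h2 v1 v2 hh1 hh2 hhind hv1 hv2 hvind m11 m12 m21 IW1 hIW1
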